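/- arXiv:1601.06319 — 2 statements merged into one kernel-verified Lean document; each statement's English description precedes it below -/
import Mathlib

section
/- Let G be a bipartite graph with vertex parts L = {u_1,...,u_N} and R = {v_1,...,v_N} that has a perfect matching, let w be a natural-number weight function on its edges that is isolating for G with unique minimum-weight perfect matching M*, and for an edge e of G let A_e be the N×N integer matrix of the graph G − e, i.e., A_e(i,j) = 2^{w(u_i,v_j)} if (u_i,v_j) is an edge of G different from e, and A_e(i,j) = 0 otherwise. Then e ∈ M* if and only if det(A_e) = 0 or 2^{w(M*)+1} divides det(A_e); and if e ∉ M*, then the largest power of 2 dividing det(A_e) is exactly 2^{w(M*)}. -/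
/-- A weight function `w` is isolating for the bipartite graph on parts
`{u₁, …, u_N}`, `{v₁, …, v_N}` with adjacency relation `adj` if there is at most one
minimum-weight perfect matching; perfect matchings are identified with permutations `σ`
of `[N]` such that `adj i (σ i)` for all `i`. -/
def BipIsolating {N : ℕ} (adj : Fin N → Fin N → Prop) (w : Fin N → Fin N → ℕ) : Prop :=
  ∀ σ τ : Equiv.Perm (Fin N), (∀ i, adj i (σ i)) → (∀ i, adj i (τ i)) →
    (∀ ρ : Equiv.Perm (Fin N), (∀ i, adj i (ρ i)) →
      ∑ i, w i (σ i) ≤ ∑ i, w i (ρ i)) →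
    (∀ ρ : Equiv.Perm (Fin N), (∀ i, adj i (ρ i)) →
      ∑ i, w i (τ i) ≤ ∑ i, w i (ρ i)) →
    σ = τ

/-- Let `G` be a bipartite graph with parts `{u₁, …, u_N}` and `{v₁, …, v_N}` given by
the adjacency relation `adj`, having a perfect matching, let `w` be an isolating
natural-number weight function with unique minimum-weight perfect matching `M*`
(given by the permutation `σ*`), let `e = (u_a, v_b)` be an edge of `G`, and let `A_e`
be the `N × N` integer matrix of `G - e`, i.e. `A_e i j = 2^(w i j)` if `(u_i, v_j)` is
an edge of `G` different from `e`, and `A_e i j = 0` otherwise.  Then `e ∈ M*` iff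
`det A_e = 0` or `2^(w M* + 1) ∣ det A_e`; and if `e ∉ M*`, the largest power of `2`
dividing `det A_e` is exactly `2^(w M*)`. -/
theorem edge_in_min_matching_iff_det (N : ℕ)
    (adj : Fin N → Fin N → Prop) [DecidableRel adj]
    (w : Fin N → Fin N → ℕ) (hiso : BipIsolating adj w)
    (σ' : Equiv.Perm (Fin N)) (hσ' : ∀ i, adj i (σ' i))
    (hσ'min : ∀ ρ : Equiv.Perm (Fin N), (∀ i, adj i (ρ i)) →
      ∑ i, w i (σ' i) ≤ ∑ i, w i (ρ i))
    (a b : Fin N) (hab : adj a b) :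
    (σ' a = b ↔
      ((Matrix.of fun i j : Fin N =>
          if adj i j ∧ ¬(i = a ∧ j = b) then (2 : ℤ) ^ w i j else 0).det = 0 ∨
        (2 : ℤ) ^ (∑ i, w i (σ' i) + 1) ∣
          (Matrix.of fun i j : Fin N =>
            if adj i j ∧ ¬(i = a ∧ j = b) then (2 : ℤ) ^ w i j else 0).det)) ∧
    (σ' a ≠ b →
      ((2 : ℤ) ^ (∑ i, w i (σ' i)) ∣
          (Matrix.of fun i j : Fin N =>
            if adj i j ∧ ¬(i = a ∧ j = b) then (2 : ℤ) ^ w i j else 0).det ∧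
        ¬ (2 : ℤ) ^ (∑ i, w i (σ' i) + 1) ∣
          (Matrix.of fun i j : Fin N =>
            if adj i j ∧ ¬(i = a ∧ j = b) then (2 : ℤ) ^ w i j else 0).det)) := by
  
  classical
  set A : Matrix (Fin N) (Fin N) ℤ := Matrix.of fun i j : Fin N =>
    if adj i j ∧ ¬(i = a ∧ j = b) then (2 : ℤ) ^ w i j else 0 with hA
  set W : ℕ := ∑ i, w i (σ' i) with hW
  -- determinant expansion
  have hdet : A.det = ∑ σ : Equiv.Perm (Fin N),
      (Equiv.Perm.sign σ : ℤ) *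
        (if ∀ i, adj i (σ i) ∧ ¬(i = a ∧ σ i = b) then (2:ℤ) ^ (∑ i, w i (σ i)) else 0) := by
    rw [← Matrix.det_transpose, Matrix.det_apply]
    refine Finset.sum_congr rfl fun σ _ => ?_
    have : (∏ i, A.transpose (σ i) i) =
        (if ∀ i, adj i (σ i) ∧ ¬(i = a ∧ σ i = b) then (2:ℤ) ^ (∑ i, w i (σ i)) else 0) := by
      by_cases h : ∀ i, adj i (σ i) ∧ ¬(i = a ∧ σ i = b)
      · rw [if_pos h]
        rw [← Finset.prod_pow_eq_pow_sum]
        refine Finset.prod_congr rfl fun i _ => ?_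
        simp [Matrix.transpose_apply, hA, h i]
      · rw [if_neg h]
        push_neg at h
        obtain ⟨i, hi⟩ := h
        refine Finset.prod_eq_zero (Finset.mem_univ i) ?_
        by_cases h1 : adj i (σ i)
        · obtain ⟨h2, h3⟩ := hi h1
          subst h2
          simp [Matrix.transpose_apply, hA, h3]
        · simp [Matrix.transpose_apply, hA, h1]
    rw [this, Units.smul_def, zsmul_eq_mul]
    norm_cast
  -- any matching other than σ' has weight ≥ W + 1
  have key : ∀ σ : Equiv.Perm (Fin N), (∀ i, adj i (σ i)) → σ ≠ σ' →
      W + 1 ≤ ∑ i, w i (σ i) := by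
    intro σ hσ hne
    by_contra h
    push_neg at h
    have h1 : ∑ i, w i (σ i) = W := le_antisymm (by omega) (hσ'min σ hσ)
    exact hne (hiso σ σ' hσ hσ' (fun ρ hρ => h1 ▸ hσ'min ρ hρ) hσ'min)
  -- each term of a matching ≠ σ' is divisible by 2^(W+1)
  have hterm : ∀ σ : Equiv.Perm (Fin N), σ ≠ σ' →
      (2:ℤ) ^ (W + 1) ∣ (Equiv.Perm.sign σ : ℤ) *
        (if ∀ i, adj i (σ i) ∧ ¬(i = a ∧ σ i = b) then (2:ℤ) ^ (∑ i, w i (σ i)) else 0) := by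
    intro σ hne
    by_cases h : ∀ i, adj i (σ i) ∧ ¬(i = a ∧ σ i = b)
    · rw [if_pos h]
      exact Dvd.dvd.mul_left (pow_dvd_pow 2 (key σ (fun i => (h i).1) hne)) _
    · rw [if_neg h]; simp
  -- Case σ' a = b : divisibility
  have part1 : σ' a = b → (2:ℤ) ^ (W + 1) ∣ A.det := by
    intro hb
    rw [hdet]
    refine Finset.dvd_sum fun σ _ => ?_
    by_cases h : ∀ i, adj i (σ i) ∧ ¬(i = a ∧ σ i = b)
    · have hne : σ ≠ σ' := fun hEq => (h a).2 ⟨rfl, by rw [hEq, hb]⟩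
      rw [if_pos h]
      exact Dvd.dvd.mul_left (pow_dvd_pow 2 (key σ (fun i => (h i).1) hne)) _
    · rw [if_neg h]; simp
  -- Case σ' a ≠ b : exact power
  have part2 : σ' a ≠ b → ((2:ℤ) ^ W ∣ A.det ∧ ¬ (2:ℤ) ^ (W + 1) ∣ A.det) := by
    intro hb
    have hcond : ∀ i, adj i (σ' i) ∧ ¬(i = a ∧ σ' i = b) := by
      intro i
      refine ⟨hσ' i, fun hc => hb (hc.1 ▸ hc.2)⟩
    have hsplit : A.det = (Equiv.Perm.sign σ' : ℤ) * (2:ℤ) ^ W +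
        ∑ σ ∈ Finset.univ.erase σ', (Equiv.Perm.sign σ : ℤ) *
          (if ∀ i, adj i (σ i) ∧ ¬(i = a ∧ σ i = b) then (2:ℤ) ^ (∑ i, w i (σ i)) else 0) := by
      rw [hdet, ← Finset.add_sum_erase _ _ (Finset.mem_univ σ'), if_pos hcond]
    have hT : (2:ℤ) ^ (W + 1) ∣ ∑ σ ∈ Finset.univ.erase σ', (Equiv.Perm.sign σ : ℤ) *
        (if ∀ i, adj i (σ i) ∧ ¬(i = a ∧ σ i = b) then (2:ℤ) ^ (∑ i, w i (σ i)) else 0) :=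
      Finset.dvd_sum fun σ hσmem => hterm σ (Finset.ne_of_mem_erase hσmem)
    constructor
    · rw [hsplit]
      exact dvd_add (Dvd.dvd.mul_left dvd_rfl _) (dvd_trans (pow_dvd_pow 2 (Nat.le_succ W)) hT)
    · intro hdvd
      have h2 : (2:ℤ) ^ (W + 1) ∣ (Equiv.Perm.sign σ' : ℤ) * (2:ℤ) ^ W := by
        have := dvd_sub hdvd hT
        rw [hsplit] at this
        simpa using this
      have h3 : (2:ℤ) ^ (W + 1) ∣ (2:ℤ) ^ W :=
        (IsUnit.dvd_mul_left (Units.isUnit (Equiv.Perm.sign σ'))).mp h2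
      have h4 : (2:ℤ) ^ (W + 1) ≤ (2:ℤ) ^ W :=
        Int.le_of_dvd (pow_pos (by norm_num) W) h3
      have h5 : (2:ℤ) ^ W < (2:ℤ) ^ (W + 1) :=
        pow_lt_pow_right₀ (by norm_num) (Nat.lt_succ_self W)
      omega
  refine ⟨⟨fun hb => Or.inr (part1 hb), fun hor => ?_⟩, part2⟩
  by_contra hne
  obtain ⟨_, hndvd⟩ := part2 hne
  rcases hor with h0 | hdvd
  · exact hndvd (h0 ▸ dvd_zero _)
  · exact hndvd hdvd
end

section
/- There exists a (non-bipartite) simple graph G with a positive integer weight function w on its edges such that every edge of G belongs to some perfect matching of G of minimum w-weight, and yet G also has a perfect matching whose w-weight is strictly greater than the minimum. In particular, the statement that every perfect matching of the union of all minimum-weight perfect matchings has minimum weight fails for non-bipartite graphs. -/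
/-- `M` is a perfect matching of the graph `G`: every edge of `M` is an edge of `G`,
and every vertex lies in exactly one edge of `M`. -/
def IsPerfectMatching {V : Type*} (G : SimpleGraph V) (M : Finset (Sym2 V)) : Prop :=
  (∀ e ∈ M, e ∈ G.edgeSet) ∧ ∀ v : V, ∃! e, e ∈ M ∧ v ∈ e

/-- The weight of a matching is the sum of the weights of its edges. -/
def matchWeight {V : Type*} (w : Sym2 V → ℤ) (M : Finset (Sym2 V)) : ℤ := ∑ e ∈ M, w e


def prismE : Finset (Sym2 (Fin 6)) :=
  {s(0,1), s(0,2), s(1,2), s(3,4), s(3,5), s(4,5), s(0,3), s(1,4), s(2,5)}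

def prismG : SimpleGraph (Fin 6) := SimpleGraph.fromEdgeSet ↑prismE

def prismW : Sym2 (Fin 6) → ℤ :=
  fun e => if e ∈ ({s(0,3), s(1,4), s(2,5)} : Finset (Sym2 (Fin 6))) then 2 else 1

def mA : Finset (Sym2 (Fin 6)) := {s(0,1), s(2,5), s(3,4)}
def mB : Finset (Sym2 (Fin 6)) := {s(1,2), s(0,3), s(4,5)}
def mC : Finset (Sym2 (Fin 6)) := {s(0,2), s(1,4), s(3,5)}
def mD : Finset (Sym2 (Fin 6)) := {s(0,3), s(1,4), s(2,5)}

lemma mem_prism (e : Sym2 (Fin 6)) : e ∈ prismG.edgeSet ↔ e ∈ prismE := by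
  rw [prismG, SimpleGraph.edgeSet_fromEdgeSet]
  simp only [Set.mem_diff, Finset.mem_coe, Set.mem_setOf_eq]
  revert e; decide

lemma pmA : IsPerfectMatching prismG mA := by
  constructor
  · intro e he; rw [mem_prism]; exact (by decide : ∀ e ∈ mA, e ∈ prismE) e he
  · exact (by decide :
      ∀ v : Fin 6, ∃ e, (e ∈ mA ∧ v ∈ e) ∧ ∀ f, (f ∈ mA ∧ v ∈ f) → f = e)

lemma pmB : IsPerfectMatching prismG mB := by
  constructor
  · intro e he; rw [mem_prism]; exact (by decide : ∀ e ∈ mB, e ∈ prismE) e he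
  · exact (by decide :
      ∀ v : Fin 6, ∃ e, (e ∈ mB ∧ v ∈ e) ∧ ∀ f, (f ∈ mB ∧ v ∈ f) → f = e)

lemma pmC : IsPerfectMatching prismG mC := by
  constructor
  · intro e he; rw [mem_prism]; exact (by decide : ∀ e ∈ mC, e ∈ prismE) e he
  · exact (by decide :
      ∀ v : Fin 6, ∃ e, (e ∈ mC ∧ v ∈ e) ∧ ∀ f, (f ∈ mC ∧ v ∈ f) → f = e)

lemma pmD : IsPerfectMatching prismG mD := by
  constructor
  · intro e he; rw [mem_prism]; exact (by decide : ∀ e ∈ mD, e ∈ prismE) e he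
  · exact (by decide :
      ∀ v : Fin 6, ∃ e, (e ∈ mD ∧ v ∈ e) ∧ ∀ f, (f ∈ mD ∧ v ∈ f) → f = e)

lemma wA : matchWeight prismW mA = 4 := by decide
lemma wB : matchWeight prismW mB = 4 := by decide
lemma wC : matchWeight prismW mC = 4 := by decide
lemma wD : matchWeight prismW mD = 6 := by decide

lemma lower_bound (M : Finset (Sym2 (Fin 6))) (hM : IsPerfectMatching prismG M) :
    4 ≤ matchWeight prismW M := by
  obtain ⟨hedge, hpm⟩ := hM
  have hsub : ∀ e ∈ M, e ∈ prismE := fun e he => (mem_prism e).1 (hedge e he)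
  -- every perfect matching contains a rung
  have hrung : ∃ r ∈ M, r ∈ ({s(0,3), s(1,4), s(2,5)} : Finset (Sym2 (Fin 6))) := by
    obtain ⟨e0, ⟨he0M, h0e0⟩, hu0⟩ := hpm 0
    have he0E : e0 ∈ prismE := hsub e0 he0M
    simp only [prismE, Finset.mem_insert, Finset.mem_singleton] at he0E
    rcases he0E with h|h|h|h|h|h|h|h|h <;> subst h
    · -- e0 = s(0,1); look at vertex 2
      obtain ⟨e2, ⟨he2M, h2e2⟩, _⟩ := hpm 2
      have he2E : e2 ∈ prismE := hsub e2 he2M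
      simp only [prismE, Finset.mem_insert, Finset.mem_singleton] at he2E
      rcases he2E with h|h|h|h|h|h|h|h|h <;> subst h
      · exact absurd h2e2 (by decide)
      · exact absurd (hu0 s(0,2) ⟨he2M, by decide⟩) (by decide)
      · obtain ⟨e1, _, hu1⟩ := hpm 1
        have h1 := hu1 s(0,1) ⟨he0M, by decide⟩
        have h2 := hu1 s(1,2) ⟨he2M, by decide⟩
        exact absurd (h2.trans h1.symm) (by decide)
      · exact absurd h2e2 (by decide)
      · exact absurd h2e2 (by decide)
      · exact absurd h2e2 (by decide)
      · exact absurd h2e2 (by decide)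
      · exact absurd h2e2 (by decide)
      · exact ⟨s(2,5), he2M, by decide⟩
    · -- e0 = s(0,2); look at vertex 1
      obtain ⟨e1, ⟨he1M, h1e1⟩, _⟩ := hpm 1
      have he1E : e1 ∈ prismE := hsub e1 he1M
      simp only [prismE, Finset.mem_insert, Finset.mem_singleton] at he1E
      rcases he1E with h|h|h|h|h|h|h|h|h <;> subst h
      · exact absurd (hu0 s(0,1) ⟨he1M, by decide⟩) (by decide)
      · exact absurd h1e1 (by decide)
      · obtain ⟨e2, _, hu2⟩ := hpm 2
        have h1 := hu2 s(0,2) ⟨he0M, by decide⟩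
        have h2 := hu2 s(1,2) ⟨he1M, by decide⟩
        exact absurd (h2.trans h1.symm) (by decide)
      · exact absurd h1e1 (by decide)
      · exact absurd h1e1 (by decide)
      · exact absurd h1e1 (by decide)
      · exact absurd h1e1 (by decide)
      · exact ⟨s(1,4), he1M, by decide⟩
      · exact absurd h1e1 (by decide)
    · exact absurd h0e0 (by decide)
    · exact absurd h0e0 (by decide)
    · exact absurd h0e0 (by decide)
    · exact absurd h0e0 (by decide)
    · exact ⟨s(0,3), he0M, by decide⟩
    · exact absurd h0e0 (by decide)
    · exact absurd h0e0 (by decide)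
  -- every perfect matching has at least 3 edges
  have hcard3 : 3 ≤ M.card := by
    set f : Fin 6 → Sym2 (Fin 6) := fun v => (hpm v).exists.choose with hf
    have hfspec : ∀ v, f v ∈ M ∧ v ∈ f v := fun v => (hpm v).exists.choose_spec
    have himg : Finset.univ.image f ⊆ M := by
      intro a ha
      obtain ⟨v, _, hv⟩ := Finset.mem_image.1 ha
      exact hv ▸ (hfspec v).1
    have hfib : ∀ a ∈ Finset.univ.image f,
        (Finset.univ.filter fun x => f x = a).card ≤ 2 := by
      intro a _
      induction a using Sym2.ind with
      | _ x y =>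
        have hsub2 : (Finset.univ.filter fun v => f v = s(x,y)) ⊆ {x, y} := by
          intro v hv
          simp only [Finset.mem_filter] at hv
          have hv2 : v ∈ f v := (hfspec v).2
          rw [hv.2] at hv2
          simpa [Finset.mem_insert, Finset.mem_singleton] using hv2
        calc (Finset.univ.filter fun v => f v = s(x,y)).card
            ≤ ({x, y} : Finset (Fin 6)).card := Finset.card_le_card hsub2
          _ ≤ 2 := le_trans (Finset.card_insert_le x {y}) (by simp)
    have h6 : (Finset.univ : Finset (Fin 6)).card ≤ 2 * (Finset.univ.image f).card :=
      Finset.card_le_mul_card_image Finset.univ 2 hfib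
    have := Finset.card_le_card himg
    simp only [Finset.card_univ, Fintype.card_fin] at h6
    omega
  obtain ⟨r, hrM, hr⟩ := hrung
  have hwr : prismW r = 2 := by
    unfold prismW; rw [if_pos hr]
  have hsplit : matchWeight prismW M = prismW r + ∑ e ∈ M.erase r, prismW e := by
    rw [matchWeight, ← Finset.add_sum_erase M prismW hrM]
  have hones : ∀ e ∈ M.erase r, (1 : ℤ) ≤ prismW e := by
    intro e _
    unfold prismW; split <;> omega
  have hsum : ((M.erase r).card : ℤ) * 1 ≤ ∑ e ∈ M.erase r, prismW e := by
    simpa using Finset.card_nsmul_le_sum (M.erase r) prismW 1 hones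
  have hcarderase : (M.erase r).card = M.card - 1 := Finset.card_erase_of_mem hrM
  rw [hsplit, hwr]
  have : (2 : ℤ) ≤ ((M.erase r).card : ℤ) := by
    rw [hcarderase]; omega
  linarith

/-- There is a (necessarily non-bipartite) simple graph `G` with a positive integer
weight function `w` on its edges such that every edge of `G` lies in some perfect
matching of `G` of minimum weight `q`, yet `G` also has a perfect matching of weight
strictly greater than `q`.  Thus the statement "every perfect matching of the union of
all minimum-weight perfect matchings has minimum weight" fails for non-bipartite
graphs. -/
theorem exists_nonbipartite_counterexample :
    ∃ (V : Type) (_ : Fintype V) (_ : DecidableEq V) (G : SimpleGraph V)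
      (w : Sym2 V → ℤ) (q : ℤ),
      ¬ G.Colorable 2 ∧
      (∀ e ∈ G.edgeSet, 0 < w e) ∧
      (∃ M, IsPerfectMatching G M ∧ matchWeight w M = q) ∧
      (∀ M, IsPerfectMatching G M → q ≤ matchWeight w M) ∧
      (∀ e ∈ G.edgeSet, ∃ M, IsPerfectMatching G M ∧ matchWeight w M = q ∧ e ∈ M) ∧
      (∃ M, IsPerfectMatching G M ∧ q < matchWeight w M) := by
  refine ⟨Fin 6, inferInstance, inferInstance, prismG, prismW, 4, ?_, ?_, ?_, ?_, ?_, ?_⟩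
  · rintro ⟨c⟩
    have hadj : ∀ a b : Fin 6, s(a,b) ∈ prismE → a ≠ b → prismG.Adj a b := by
      intro a b h hne
      rw [prismG, SimpleGraph.fromEdgeSet_adj]
      exact ⟨Finset.mem_coe.mpr h, hne⟩
    have h01 := c.valid (hadj 0 1 (by decide) (by decide))
    have h02 := c.valid (hadj 0 2 (by decide) (by decide))
    have h12 := c.valid (hadj 1 2 (by decide) (by decide))
    exact (by decide : ∀ x y z : Fin 2, x ≠ y → x ≠ z → y ≠ z → False)
      (c 0) (c 1) (c 2) h01 h02 h12
  · intro e _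
    unfold prismW; split <;> omega
  · exact ⟨mA, pmA, wA⟩
  · exact lower_bound
  · intro e he
    rw [mem_prism] at he
    simp only [prismE, Finset.mem_insert, Finset.mem_singleton] at he
    rcases he with h|h|h|h|h|h|h|h|h <;> subst h
    · exact ⟨mA, pmA, wA, by decide⟩
    · exact ⟨mC, pmC, wC, by decide⟩
    · exact ⟨mB, pmB, wB, by decide⟩
    · exact ⟨mA, pmA, wA, by decide⟩
    · exact ⟨mC, pmC, wC, by decide⟩
    · exact ⟨mB, pmB, wB, by decide⟩
    · exact ⟨mB, pmB, wB, by decide⟩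
    · exact ⟨mC, pmC, wC, by decide⟩
    · exact ⟨mA, pmA, wA, by decide⟩
  · exact ⟨mD, pmD, by rw [wD]; omega⟩
end
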